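/- A continuum X (nonempty compact connected Hausdorff space) is decomposable — the union of two proper subcontinua — if and only if X has a proper subcontinuum with nonempty interior. -/
import Mathlib

open Set

/-- Key separation lemma: if `X` is connected, `A` is preconnected, and the
complement of `A` is the union of two disjoint open sets `U`, `V`, then
`A ∪ U` is preconnected. -/
lemma union_piece_preconnected {X : Type*} [TopologicalSpace X] [ConnectedSpace X]
    {A U V : Set X} (hA : IsPreconnected A) (hU : IsOpen U) (hV : IsOpen V)
    (hUV : U ∩ V = ∅) (hcompl : Aᶜ = U ∪ V) : IsPreconnected (A ∪ U) := by
  set s : Set X := A ∪ U with hs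
  have hsV : s = Vᶜ := by
    have hAeq : A = (U ∪ V)ᶜ := by rw [← hcompl, compl_compl]
    rw [hs, hAeq, compl_union]
    ext x
    simp only [mem_union, mem_inter_iff, mem_compl_iff]
    constructor
    · rintro (⟨hu, hv⟩ | hu)
      · exact hv
      · intro hv
        exact absurd ((Set.ext_iff.mp hUV x).mp ⟨hu, hv⟩) (Set.notMem_empty x)
    · intro hv
      by_cases hu : x ∈ U
      · exact Or.inr hu
      · exact Or.inl ⟨hu, hv⟩
  have hs_closed : IsClosed s := hsV ▸ hV.isClosed_compl
  -- main argument
  rintro u v hu hv hsub ⟨x, hxs, hxu⟩ ⟨y, hys, hyv⟩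
  by_contra hne
  rw [Set.not_nonempty_iff_eq_empty, ← Set.inter_assoc] at hne
  have hmem : ∀ z : X, z ∉ s ∩ u ∩ v := fun z hz => by
    rw [hne] at hz; exact absurd hz (Set.notMem_empty z)
  -- A is contained in u or in v
  have hAsub : A ⊆ u ∪ v := (subset_union_left.trans hsub)
  have hAcases : A ⊆ u ∨ A ⊆ v := by
    by_cases hAu : (A ∩ u).Nonempty
    · left
      by_cases hAv : (A ∩ v).Nonempty
      · obtain ⟨z, hzA, hzu, hzv⟩ := hA u v hu hv hAsub hAu hAv
        exact absurd (show z ∈ s ∩ u ∩ v from ⟨⟨Or.inl hzA, hzu⟩, hzv⟩) (hmem z)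
      · intro z hz
        rcases hAsub hz with h | h
        · exact h
        · exact absurd ⟨z, hz, h⟩ hAv
    · right
      intro z hz
      rcases hAsub hz with h | h
      · exact absurd ⟨z, hz, h⟩ hAu
      · exact h
  -- symmetric core argument
  have core : ∀ u' v' : Set X, IsOpen u' → IsOpen v' → s ⊆ u' ∪ v' →
      (∀ z : X, z ∉ s ∩ u' ∩ v') → A ⊆ u' → (s ∩ u').Nonempty → (s ∩ v').Nonempty → False := by
    intro u' v' hu' hv' hsub' hne' hAu' hxu' hyv'
    have hQ1 : s ∩ v' = U ∩ v' := by
      ext z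
      constructor
      · rintro ⟨hzs, hzv⟩
        rcases hzs with hzA | hzU
        · exact absurd (show z ∈ s ∩ u' ∩ v' from ⟨⟨Or.inl hzA, hAu' hzA⟩, hzv⟩) (hne' z)
        · exact ⟨hzU, hzv⟩
      · rintro ⟨hzU, hzv⟩; exact ⟨Or.inr hzU, hzv⟩
    have hQ2 : s ∩ v' = s ∩ u'ᶜ := by
      ext z
      constructor
      · rintro ⟨hzs, hzv⟩
        refine ⟨hzs, fun hzu => ?_⟩
        exact hne' z ⟨⟨hzs, hzu⟩, hzv⟩
      · rintro ⟨hzs, hzu⟩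
        rcases hsub' hzs with h | h
        · exact absurd h hzu
        · exact ⟨hzs, h⟩
    have hopen : IsOpen (s ∩ v') := hQ1 ▸ hU.inter hv'
    have hclosed : IsClosed (s ∩ v') := hQ2 ▸ hs_closed.inter hu'.isClosed_compl
    rcases isClopen_iff.mp ⟨hclosed, hopen⟩ with h | h
    · exact absurd (h ▸ hyv') (by simp)
    · obtain ⟨w, hws, hwu⟩ := hxu'
      have hwv : w ∈ s ∩ v' := h ▸ mem_univ w
      exact hne' w ⟨⟨hws, hwu⟩, hwv.2⟩
  rcases hAcases with hAu | hAv
  · exact core u v hu hv hsub hmem hAu ⟨x, hxs, hxu⟩ ⟨y, hys, hyv⟩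
  · exact core v u hv hu (by rwa [union_comm])
      (fun z hz => hmem z ⟨⟨hz.1.1, hz.2⟩, hz.1.2⟩) hAv
      ⟨y, hys, hyv⟩ ⟨x, hxs, hxu⟩

/-- A continuum (nonempty compact connected Hausdorff space) is decomposable —
the union of two proper subcontinua — if and only if it has a proper
subcontinuum with nonempty interior. -/
theorem continuum_decomposable_iff_proper_subcontinuum_interior
    {X : Type*} [TopologicalSpace X] [CompactSpace X] [T2Space X]
    [ConnectedSpace X] [Nonempty X] :
    (∃ A B : Set X, IsCompact A ∧ IsConnected A ∧ A ≠ Set.univ ∧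
        IsCompact B ∧ IsConnected B ∧ B ≠ Set.univ ∧ A ∪ B = Set.univ) ↔
      ∃ A : Set X, IsCompact A ∧ IsConnected A ∧ A ≠ Set.univ ∧
        (interior A).Nonempty := by
  constructor
  · rintro ⟨A, B, hAc, hAconn, hAne, hBc, hBconn, hBne, hAB⟩
    refine ⟨A, hAc, hAconn, hAne, ?_⟩
    have hBcl : IsClosed B := hBc.isClosed
    have hsub : Bᶜ ⊆ interior A := by
      apply interior_maximal _ hBcl.isOpen_compl
      intro x hx
      rcases (Set.ext_iff.mp hAB x).mpr (mem_univ x) with h | h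
      · exact h
      · exact absurd h hx
    exact (Set.nonempty_compl.mpr hBne).mono hsub
  · rintro ⟨A, hAc, hAconn, hAne, hint⟩
    have hAcl : IsClosed A := hAc.isClosed
    have hAcne : Aᶜ.Nonempty := Set.nonempty_compl.mpr hAne
    by_cases hconn : IsPreconnected (Aᶜ : Set X)
    · refine ⟨A, closure Aᶜ, hAc, hAconn, hAne,
        isClosed_closure.isCompact, ⟨hAcne.closure, hconn.closure⟩, ?_, ?_⟩
      · rw [closure_compl]
        intro h
        have h2 : interior A = ∅ := by simpa using congrArg compl h
        exact hint.ne_empty h2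
      · apply eq_univ_of_univ_subset
        intro x _
        by_cases hx : x ∈ A
        · exact Or.inl hx
        · exact Or.inr (subset_closure hx)
    · rw [IsPreconnected] at hconn
      push_neg at hconn
      obtain ⟨u, v, hu, hv, hsub, hnu, hnv, hne⟩ := hconn
      set U : Set X := Aᶜ ∩ u with hUdef
      set V : Set X := Aᶜ ∩ v with hVdef
      have hUo : IsOpen U := hAcl.isOpen_compl.inter hu
      have hVo : IsOpen V := hAcl.isOpen_compl.inter hv
      have hUV : U ∩ V = ∅ := by
        rw [← hne]; ext z; simp [hUdef, hVdef]; tauto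
      have hcompl : Aᶜ = U ∪ V := by
        ext z
        simp only [hUdef, hVdef, mem_union, mem_inter_iff]
        constructor
        · intro hz; rcases hsub hz with h | h
          · exact Or.inl ⟨hz, h⟩
          · exact Or.inr ⟨hz, h⟩
        · rintro (⟨h, _⟩ | ⟨h, _⟩) <;> exact h
      have h1 : IsPreconnected (A ∪ U) :=
        union_piece_preconnected hAconn.isPreconnected hUo hVo hUV hcompl
      have h2 : IsPreconnected (A ∪ V) :=
        union_piece_preconnected hAconn.isPreconnected hVo hUo
          (by rw [← hUV]; ac_rfl) (by rw [hcompl, union_comm])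
      have hclosed1 : IsClosed (A ∪ U) := by
        have : A ∪ U = Vᶜ := by
          ext z
          simp only [mem_union, mem_compl_iff]
          constructor
          · rintro (hz | hz)
            · intro hzV
              exact (show z ∈ Aᶜ by rw [hcompl]; exact Or.inr hzV) hz
            · intro hzV
              exact absurd ((Set.ext_iff.mp hUV z).mp ⟨hz, hzV⟩) (by simp)
          · intro hzV
            by_cases hzA : z ∈ A
            · exact Or.inl hzA
            · rcases (show z ∈ U ∪ V by rw [← hcompl]; exact hzA) with h | h
              · exact Or.inr h
              · exact absurd h hzV
        rw [this]; exact hVo.isClosed_compl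
      have hclosed2 : IsClosed (A ∪ V) := by
        have : A ∪ V = Uᶜ := by
          ext z
          simp only [mem_union, mem_compl_iff]
          constructor
          · rintro (hz | hz)
            · intro hzU
              exact (show z ∈ Aᶜ by rw [hcompl]; exact Or.inl hzU) hz
            · intro hzU
              exact absurd ((Set.ext_iff.mp hUV z).mp ⟨hzU, hz⟩) (by simp)
          · intro hzU
            by_cases hzA : z ∈ A
            · exact Or.inl hzA
            · rcases (show z ∈ U ∪ V by rw [← hcompl]; exact hzA) with h | h
              · exact absurd h hzU
              · exact Or.inr h
        rw [this]; exact hUo.isClosed_compl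
      have hVne : V.Nonempty := by
        obtain ⟨z, hz1, hz2⟩ := hnv
        exact ⟨z, hz1, hz2⟩
      have hUne : U.Nonempty := by
        obtain ⟨z, hz1, hz2⟩ := hnu
        exact ⟨z, hz1, hz2⟩
      refine ⟨A ∪ U, A ∪ V, hclosed1.isCompact, ⟨hAconn.nonempty.mono subset_union_left, h1⟩,
        ?_, hclosed2.isCompact, ⟨hAconn.nonempty.mono subset_union_left, h2⟩, ?_, ?_⟩
      · intro h
        obtain ⟨z, hzV⟩ := hVne
        have hzA : z ∈ Aᶜ := by rw [hcompl]; exact Or.inr hzV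
        rcases (h ▸ mem_univ z : z ∈ A ∪ U) with hh | hh
        · exact hzA hh
        · exact absurd ((Set.ext_iff.mp hUV z).mp ⟨hh, hzV⟩) (by simp)
      · intro h
        obtain ⟨z, hzU⟩ := hUne
        have hzA : z ∈ Aᶜ := by rw [hcompl]; exact Or.inl hzU
        rcases (h ▸ mem_univ z : z ∈ A ∪ V) with hh | hh
        · exact hzA hh
        · exact absurd ((Set.ext_iff.mp hUV z).mp ⟨hzU, hh⟩) (by simp)
      · apply eq_univ_of_univ_subset
        intro z _
        by_cases hzA : z ∈ A
        · exact Or.inl (Or.inl hzA)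
        · rcases (show z ∈ U ∪ V by rw [← hcompl]; exact hzA) with h | h
          · exact Or.inl (Or.inr h)
          · exact Or.inr (Or.inr h)
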